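/- Let η ∈ [0,1] and let t ∈ ℝ² be a unit vector. Then the infimum over pairs (z_1, z_2) ∈ ℝ² × ℝ² of ψ̃(e_1, z_1) + ψ̃(e_2, z_2) + ψ̃(e_1 − e_2, (z_2 − z_1)/2) + ψ̃(e_1 + e_2, t − (z_1 + z_2)/2) equals the infimum over z ∈ ℝ² of ψ̃(e_1, z) + ψ̃(e_2, z) + ψ̃(e_1 + e_2, t − z); that is, the four-term minimization is attained with z_1 = z_2. -/

import Mathlib

set_option maxHeartbeats 1000000


/-- The positively one-homogeneous extension
`ψ̃(b,T) = |T||b|² + η (b·T)²/|T|`, with `ψ̃(b,0) = 0`. -/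
noncomputable def psiT (n : ℕ) (η : ℝ) (b T : EuclideanSpace ℝ (Fin n)) : ℝ :=
  ‖T‖ * ‖b‖ ^ 2 + η * (inner ℝ b T : ℝ) ^ 2 / ‖T‖

lemma circle_bound (w0 w1 u0 u1 : ℝ) (hw : w0^2+w1^2 = 1) (hu : u0^2+u1^2 = 1) :
    (2-w0^2+w1^2)*w0*u0 + (-2-w0^2+w1^2)*w1*u1 ≤ 2 := by
  have h6 : (4*w0^3-3*w0)^2 + (3*w1-4*w1^3)^2 = 1 := by
    linear_combination (16*w1^4 - (16*w0^2+8)*w1^2 + (4*w0^2-1)^2) * hw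
  have h1 : w0*u0 - w1*u1 ≤ 1 := by nlinarith [sq_nonneg (w0-u0), sq_nonneg (w1+u1)]
  have h2 : -1 ≤ (4*w0^3-3*w0)*u0 + (3*w1-4*w1^3)*u1 := by
    nlinarith [sq_nonneg (4*w0^3-3*w0+u0), sq_nonneg (3*w1-4*w1^3+u1)]
  have hG : (2-w0^2+w1^2)*w0*u0 + (-2-w0^2+w1^2)*w1*u1
      = 3/2*(w0*u0-w1*u1) - 1/2*((4*w0^3-3*w0)*u0 + (3*w1-4*w1^3)*u1) := by
    linear_combination (w0*u0 - w1*u1) * hw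
  linarith

-- supporting functional for psi-tilde(e1, .)
lemma claim1 (η w0 w1 p q : ℝ) (hη0 : 0 ≤ η) (hη1 : η ≤ 1) (hw : w0^2+w1^2 = 1) :
    ((1-η*w0^2)*w0 + 2*η*w0)*p + (1-η*w0^2)*w1*q
      ≤ Real.sqrt (p^2+q^2) + η*p^2/Real.sqrt (p^2+q^2) := by
  set P := Real.sqrt (p^2+q^2) with hPdef
  rcases eq_or_lt_of_le (Real.sqrt_nonneg (p^2+q^2)) with h0 | hP
  · have h : p^2 + q^2 = 0 := by
      nlinarith [Real.sq_sqrt (by positivity : (0:ℝ) ≤ p^2+q^2), h0]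
    have hp : p = 0 := by nlinarith [sq_nonneg p, sq_nonneg q]
    have hq : q = 0 := by nlinarith [sq_nonneg p, sq_nonneg q]
    rw [hp, hq]
    simp [← hPdef, ← h0]
    exact Real.sqrt_nonneg _
  · have hP2 : P^2 = p^2+q^2 := Real.sq_sqrt (by positivity)
    have hcs : w0*p + w1*q ≤ P := by
      nlinarith [sq_nonneg (w0*q - w1*p), sq_nonneg (w0*p + w1*q - P)]
    have hco : 0 ≤ 1 - η*w0^2 := by nlinarith [sq_nonneg w1, sq_nonneg w0]
    have hcs' : 0 ≤ P - (w0*p + w1*q) := by linarith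
    have key : (((1-η*w0^2)*w0 + 2*η*w0)*p + (1-η*w0^2)*w1*q) * P ≤ P^2 + η*p^2 := by
      nlinarith [mul_nonneg hη0 (sq_nonneg (w0*P - p)), mul_nonneg (mul_nonneg hco hcs') hP.le]
    calc ((1-η*w0^2)*w0 + 2*η*w0)*p + (1-η*w0^2)*w1*q
        ≤ (P^2 + η*p^2)/P := (le_div_iff₀ hP).mpr key
      _ = P + η*p^2/P := by field_simp

-- supporting functional for psi-tilde(e1-e2, .)
lemma claim3 (η w0 w1 T0 T1 : ℝ) (hη0 : 0 ≤ η) (hη1 : η ≤ 1) (hw : w0^2+w1^2 = 1) :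
    η*((2-w0^2+w1^2)*w0*T0 + (-2-w0^2+w1^2)*w1*T1)
      ≤ 2*Real.sqrt (T0^2+T1^2) + η*(T0-T1)^2/Real.sqrt (T0^2+T1^2) := by
  set N := Real.sqrt (T0^2+T1^2) with hNdef
  rcases eq_or_lt_of_le (Real.sqrt_nonneg (T0^2+T1^2)) with h0 | hN
  · have h : T0^2 + T1^2 = 0 := by
      nlinarith [Real.sq_sqrt (by positivity : (0:ℝ) ≤ T0^2+T1^2), h0]
    have hp : T0 = 0 := by nlinarith [sq_nonneg T0, sq_nonneg T1]
    have hq : T1 = 0 := by nlinarith [sq_nonneg T0, sq_nonneg T1]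
    rw [hp, hq]
    simp [← hNdef, ← h0]
    exact Real.sqrt_nonneg _
  · have hN2 : N^2 = T0^2+T1^2 := Real.sq_sqrt (by positivity)
    have hu : (T0/N)^2 + (T1/N)^2 = 1 := by
      field_simp
      rw [← hN2]; exact div_self (pow_ne_zero 2 (show N ≠ 0 from hN.ne'))
    have hc := circle_bound w0 w1 (T0/N) (T1/N) hw hu
    have hB : (2-w0^2+w1^2)*w0*T0 + (-2-w0^2+w1^2)*w1*T1
        = ((2-w0^2+w1^2)*w0*(T0/N) + (-2-w0^2+w1^2)*w1*(T1/N)) * N := by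
      field_simp
      exact (mul_div_cancel_right₀ _ (show N ≠ 0 from hN.ne')).symm
    have hstep : η*((2-w0^2+w1^2)*w0*T0 + (-2-w0^2+w1^2)*w1*T1) ≤ 2*N := by
      rw [hB]
      rcases le_or_gt (((2-w0^2+w1^2)*w0*(T0/N) + (-2-w0^2+w1^2)*w1*(T1/N)) * N) 0 with hle | hgt
      · nlinarith
      · nlinarith [mul_le_mul_of_nonneg_right hc hN.le]
    have : 0 ≤ η*(T0-T1)^2/N := by positivity
    linarith

lemma scalar_key (η p q r s : ℝ) (hη0 : 0 ≤ η) (hη1 : η ≤ 1) :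
    (Real.sqrt (((p+r)/2)^2 + ((q+s)/2)^2) + η*((p+r)/2)^2 / Real.sqrt (((p+r)/2)^2 + ((q+s)/2)^2))
    + (Real.sqrt (((p+r)/2)^2 + ((q+s)/2)^2) + η*((q+s)/2)^2 / Real.sqrt (((p+r)/2)^2 + ((q+s)/2)^2))
      ≤ ((Real.sqrt (p^2+q^2) + η*p^2 / Real.sqrt (p^2+q^2))
      + (Real.sqrt (r^2+s^2) + η*s^2 / Real.sqrt (r^2+s^2)))
      + (2*Real.sqrt (((r-p)/2)^2+((s-q)/2)^2)
          + η*((r-p)/2-(s-q)/2)^2 / Real.sqrt (((r-p)/2)^2+((s-q)/2)^2)) := by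
  have hRHS0 : (0:ℝ) ≤ ((Real.sqrt (p^2+q^2) + η*p^2 / Real.sqrt (p^2+q^2))
      + (Real.sqrt (r^2+s^2) + η*s^2 / Real.sqrt (r^2+s^2)))
      + (2*Real.sqrt (((r-p)/2)^2+((s-q)/2)^2)
          + η*((r-p)/2-(s-q)/2)^2 / Real.sqrt (((r-p)/2)^2+((s-q)/2)^2)) := by positivity
  set M := Real.sqrt (((p+r)/2)^2 + ((q+s)/2)^2) with hMdef
  rcases eq_or_lt_of_le (Real.sqrt_nonneg (((p+r)/2)^2 + ((q+s)/2)^2)) with h0 | hM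
  · have h : ((p+r)/2)^2 + ((q+s)/2)^2 = 0 := by
      nlinarith [Real.sq_sqrt (by positivity : (0:ℝ) ≤ ((p+r)/2)^2 + ((q+s)/2)^2), h0]
    have hp : (p+r)/2 = 0 := by nlinarith [sq_nonneg ((p+r)/2), sq_nonneg ((q+s)/2)]
    have hq : (q+s)/2 = 0 := by nlinarith [sq_nonneg ((p+r)/2), sq_nonneg ((q+s)/2)]
    have hM0 : M = 0 := hMdef.trans h0.symm
    rw [hp, hq, hM0]
    simpa using hRHS0
  · have hM2 : M^2 = ((p+r)/2)^2 + ((q+s)/2)^2 := Real.sq_sqrt (by positivity)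
    have hMne : M ≠ 0 := by rw [hMdef]; exact hM.ne'
    set w0 : ℝ := (p+r)/(2*M) with hw0def
    set w1 : ℝ := (q+s)/(2*M) with hw1def
    have hr : p + r = 2*M*w0 := by rw [hw0def]; field_simp
    have hs : q + s = 2*M*w1 := by rw [hw1def]; field_simp
    have hMpos : 0 < M := by rw [hMdef]; exact hM
    clear_value M w0 w1
    have hw : w0^2 + w1^2 = 1 := by
      have h4 : 4*M^2*(w0^2+w1^2) = 4*M^2*1 := by
        linear_combination (-4)*hM2 - (p+r+2*M*w0)*hr - (q+s+2*M*w1)*hs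
      exact mul_left_cancel₀ (by nlinarith : (4*M^2:ℝ) ≠ 0) h4
    have hLHS : (M + η*((p+r)/2)^2 / M) + (M + η*((q+s)/2)^2 / M) = (2+η)*M := by
      rw [hr, hs]
      field_simp
      linear_combination η*hw
    have c1 := claim1 η w0 w1 p q hη0 hη1 hw
    have c2 := claim1 η w1 w0 s r hη0 hη1 (by linarith [hw])
    rw [show s^2+r^2 = r^2+s^2 by ring] at c2
    have c3 := claim3 η w0 w1 ((r-p)/2) ((s-q)/2) hη0 hη1 hw
    have e2 : w0*(p+r) + w1*(q+s) = 2*M := by linear_combination w0*hr + w1*hs + 2*M*hw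
    have hsum : (((1-η*w0^2)*w0 + 2*η*w0)*p + (1-η*w0^2)*w1*q)
        + (((1-η*w1^2)*w1 + 2*η*w1)*s + (1-η*w1^2)*w0*r)
        + (η*((2-w0^2+w1^2)*w0*((r-p)/2) + (-2-w0^2+w1^2)*w1*((s-q)/2)))
        = (2+η)*M := by
      have e1 : (((1-η*w0^2)*w0 + 2*η*w0)*p + (1-η*w0^2)*w1*q)
          + (((1-η*w1^2)*w1 + 2*η*w1)*s + (1-η*w1^2)*w0*r)
          + (η*((2-w0^2+w1^2)*w0*((r-p)/2) + (-2-w0^2+w1^2)*w1*((s-q)/2)))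
          = (1+η-(η/2)*(w0^2+w1^2))*(w0*(p+r)+w1*(q+s)) := by ring
      rw [e1, hw, e2]
      ring
    linarith
lemma norm_eq2 (x : EuclideanSpace ℝ (Fin 2)) : ‖x‖ = Real.sqrt ((x 0)^2 + (x 1)^2) := by
  rw [EuclideanSpace.norm_eq]
  simp [Fin.sum_univ_two, sq_abs]

lemma inner_eq2 (b x : EuclideanSpace ℝ (Fin 2)) : (inner ℝ b x : ℝ) = b 0 * x 0 + b 1 * x 1 := by
  simp [PiLp.inner_apply, Fin.sum_univ_two]
  ring

lemma psiT_e1 (η : ℝ) (T : EuclideanSpace ℝ (Fin 2)) :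
    psiT 2 η (EuclideanSpace.single 0 1) T
      = Real.sqrt ((T 0)^2+(T 1)^2) + η * (T 0)^2 / Real.sqrt ((T 0)^2+(T 1)^2) := by
  rw [psiT, norm_eq2, inner_eq2, norm_eq2]; simp

lemma psiT_e2 (η : ℝ) (T : EuclideanSpace ℝ (Fin 2)) :
    psiT 2 η (EuclideanSpace.single 1 1) T
      = Real.sqrt ((T 0)^2+(T 1)^2) + η * (T 1)^2 / Real.sqrt ((T 0)^2+(T 1)^2) := by
  rw [psiT, norm_eq2, inner_eq2, norm_eq2]; simp

lemma psiT_e1me2 (η : ℝ) (T : EuclideanSpace ℝ (Fin 2)) :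
    psiT 2 η ((EuclideanSpace.single 0 1 : EuclideanSpace ℝ (Fin 2)) - EuclideanSpace.single 1 1) T
      = 2 * Real.sqrt ((T 0)^2+(T 1)^2)
        + η * (T 0 - T 1)^2 / Real.sqrt ((T 0)^2+(T 1)^2) := by
  rw [psiT, norm_eq2, inner_eq2, norm_eq2]
  simp [PiLp.sub_apply]
  ring

lemma psiT_e1pe2 (η : ℝ) (T : EuclideanSpace ℝ (Fin 2)) :
    psiT 2 η ((EuclideanSpace.single 0 1 : EuclideanSpace ℝ (Fin 2)) + EuclideanSpace.single 1 1) T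
      = 2 * Real.sqrt ((T 0)^2+(T 1)^2)
        + η * (T 0 + T 1)^2 / Real.sqrt ((T 0)^2+(T 1)^2) := by
  rw [psiT, norm_eq2, inner_eq2, norm_eq2]
  simp [PiLp.add_apply]
  ring

lemma psiT_nonneg (n : ℕ) (η : ℝ) (hη : 0 ≤ η) (b T : EuclideanSpace ℝ (Fin n)) :
    0 ≤ psiT n η b T :=
  add_nonneg (mul_nonneg (norm_nonneg _) (sq_nonneg _))
    (div_nonneg (mul_nonneg hη (sq_nonneg _)) (norm_nonneg _))

lemma psiT_zero (n : ℕ) (η : ℝ) (b : EuclideanSpace ℝ (Fin n)) : psiT n η b 0 = 0 := by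
  simp [psiT]

lemma key_lemma (η : ℝ) (hη0 : 0 ≤ η) (hη1 : η ≤ 1) (z₁ z₂ : EuclideanSpace ℝ (Fin 2)) :
    psiT 2 η (EuclideanSpace.single 0 1) ((1/2 : ℝ) • (z₁ + z₂))
    + psiT 2 η (EuclideanSpace.single 1 1) ((1/2 : ℝ) • (z₁ + z₂))
      ≤ psiT 2 η (EuclideanSpace.single 0 1) z₁ + psiT 2 η (EuclideanSpace.single 1 1) z₂
        + psiT 2 η ((EuclideanSpace.single 0 1 : EuclideanSpace ℝ (Fin 2)) -
            EuclideanSpace.single 1 1) ((1/2 : ℝ) • (z₂ - z₁)) := by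
  have e0 : ((1/2 : ℝ) • (z₁ + z₂)) 0 = (z₁ 0 + z₂ 0)/2 := by
    simp [PiLp.smul_apply, PiLp.add_apply]; ring
  have e1 : ((1/2 : ℝ) • (z₁ + z₂)) 1 = (z₁ 1 + z₂ 1)/2 := by
    simp [PiLp.smul_apply, PiLp.add_apply]; ring
  have f0 : ((1/2 : ℝ) • (z₂ - z₁)) 0 = (z₂ 0 - z₁ 0)/2 := by
    simp [PiLp.smul_apply, PiLp.sub_apply]; ring
  have f1 : ((1/2 : ℝ) • (z₂ - z₁)) 1 = (z₂ 1 - z₁ 1)/2 := by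
    simp [PiLp.smul_apply, PiLp.sub_apply]; ring
  rw [psiT_e1, psiT_e2, psiT_e1, psiT_e2, psiT_e1me2, e0, e1, f0, f1]
  exact scalar_key η (z₁ 0) (z₁ 1) (z₂ 0) (z₂ 1) hη0 hη1

/-- The four-term minimization over `(z₁, z₂)` is attained with `z₁ = z₂`:
the infimum over pairs equals the infimum of the three-term expression. -/
theorem inf_four_term_eq_inf_three_term (η : ℝ) (hη : η ∈ Set.Icc (0 : ℝ) 1)
    (t : EuclideanSpace ℝ (Fin 2)) (ht : ‖t‖ = 1) :
    (⨅ z : EuclideanSpace ℝ (Fin 2) × EuclideanSpace ℝ (Fin 2),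
      (psiT 2 η (EuclideanSpace.single 0 1) z.1 +
       psiT 2 η (EuclideanSpace.single 1 1) z.2 +
       psiT 2 η ((EuclideanSpace.single 0 1 : EuclideanSpace ℝ (Fin 2)) -
          EuclideanSpace.single 1 1) ((1 / 2 : ℝ) • (z.2 - z.1)) +
       psiT 2 η ((EuclideanSpace.single 0 1 : EuclideanSpace ℝ (Fin 2)) +
          EuclideanSpace.single 1 1) (t - (1 / 2 : ℝ) • (z.1 + z.2)))) =
    (⨅ z : EuclideanSpace ℝ (Fin 2),
      (psiT 2 η (EuclideanSpace.single 0 1) z +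
       psiT 2 η (EuclideanSpace.single 1 1) z +
       psiT 2 η ((EuclideanSpace.single 0 1 : EuclideanSpace ℝ (Fin 2)) +
          EuclideanSpace.single 1 1) (t - z))) := by
  obtain ⟨hη0, hη1⟩ := hη
  have bdd1 : BddBelow (Set.range fun z : EuclideanSpace ℝ (Fin 2) × EuclideanSpace ℝ (Fin 2) =>
      (psiT 2 η (EuclideanSpace.single 0 1) z.1 +
       psiT 2 η (EuclideanSpace.single 1 1) z.2 +
       psiT 2 η ((EuclideanSpace.single 0 1 : EuclideanSpace ℝ (Fin 2)) -
          EuclideanSpace.single 1 1) ((1 / 2 : ℝ) • (z.2 - z.1)) +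
       psiT 2 η ((EuclideanSpace.single 0 1 : EuclideanSpace ℝ (Fin 2)) +
          EuclideanSpace.single 1 1) (t - (1 / 2 : ℝ) • (z.1 + z.2)))) := by
    refine ⟨0, ?_⟩
    rintro x ⟨z, rfl⟩
    have h1 := psiT_nonneg 2 η hη0 (EuclideanSpace.single 0 1) z.1
    have h2 := psiT_nonneg 2 η hη0 (EuclideanSpace.single 1 1) z.2
    have h3 := psiT_nonneg 2 η hη0 ((EuclideanSpace.single 0 1 : EuclideanSpace ℝ (Fin 2)) -
          EuclideanSpace.single 1 1) ((1 / 2 : ℝ) • (z.2 - z.1))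
    have h4 := psiT_nonneg 2 η hη0 ((EuclideanSpace.single 0 1 : EuclideanSpace ℝ (Fin 2)) +
          EuclideanSpace.single 1 1) (t - (1 / 2 : ℝ) • (z.1 + z.2))
    dsimp only
    linarith
  apply le_antisymm
  · refine le_ciInf fun z => ?_
    refine le_trans (ciInf_le bdd1 (z, z)) (le_of_eq ?_)
    have hzz : (1/2 : ℝ) • (z + z) = z := by module
    have hz0 : (1/2 : ℝ) • (z - z) = (0 : EuclideanSpace ℝ (Fin 2)) := by
      rw [sub_self, smul_zero]
    dsimp only
    rw [hzz, hz0, psiT_zero]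
    ring
  · refine le_ciInf fun z => ?_
    have bdd2 : BddBelow (Set.range fun z : EuclideanSpace ℝ (Fin 2) =>
      (psiT 2 η (EuclideanSpace.single 0 1) z +
       psiT 2 η (EuclideanSpace.single 1 1) z +
       psiT 2 η ((EuclideanSpace.single 0 1 : EuclideanSpace ℝ (Fin 2)) +
          EuclideanSpace.single 1 1) (t - z))) := by
      refine ⟨0, ?_⟩
      rintro x ⟨w, rfl⟩
      have h1 := psiT_nonneg 2 η hη0 (EuclideanSpace.single 0 1) w
      have h2 := psiT_nonneg 2 η hη0 (EuclideanSpace.single 1 1) w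
      have h3 := psiT_nonneg 2 η hη0 ((EuclideanSpace.single 0 1 : EuclideanSpace ℝ (Fin 2)) +
          EuclideanSpace.single 1 1) (t - w)
      dsimp only
      linarith
    refine le_trans (ciInf_le bdd2 ((1/2 : ℝ) • (z.1 + z.2))) ?_
    have hkey := key_lemma η hη0 hη1 z.1 z.2
    linarith
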